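/- Let d be an odd positive integer, δ ∈ ℝ, and for k, l ∈ {-(d-1)/2, …, (d-1)/2} define M_{lk} = |⟨θ_l | θ_{k+δ}⟩|², where |θ_s⟩ has components d^{-1/2} e^{-2πisn/d}. Then M_{lk} = (1/d) ∑_{r=-(d-1)/2}^{(d-1)/2} e^{2πir(l-k)/d} e^{-2πiδr/d} (1 - (1 - e^{2πiδ·sign(r)}) |r|/d), and consequently M is a doubly stochastic matrix whose eigenvalues are λ_r = e^{-2πiδr/d}(1 - (1 - e^{2πiδ·sign(r)})|r|/d) with eigenvectors v_r = (d^{-1/2} e^{2πirk/d})_k. -/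

import Mathlib

open Complex

/-- Physical index: k ∈ Fin d represents the integer k - (d-1)/2. -/
def clockIdx (d : ℕ) (k : Fin d) : ℤ := (k : ℤ) - ((d : ℤ) - 1) / 2

/-- The "time state" vector |θ_s⟩ ∈ ℂ^d with components d^{-1/2} e^{-2πi s n/d},
    n ranging over {-(d-1)/2,…,(d-1)/2}. -/
noncomputable def clockVec (d : ℕ) (s : ℝ) : EuclideanSpace ℂ (Fin d) := WithLp.toLp 2 fun n =>
  (1 / Real.sqrt d : ℝ) * Complex.exp (-2 * Real.pi * Complex.I * s * (clockIdx d n : ℂ) / d)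

/-- The transition matrix M_{lk} = |⟨θ_l | θ_{k+δ}⟩|². -/
noncomputable def clockM (d : ℕ) (δ : ℝ) : Matrix (Fin d) (Fin d) ℂ :=
  Matrix.of fun l k =>
    ((‖(inner ℂ (clockVec d (clockIdx d l : ℝ)) (clockVec d ((clockIdx d k : ℝ) + δ)) : ℂ)‖) ^ 2 : ℝ)

/-- Eigenvalue λ_r = e^{-2πiδr/d}(1 - (1 - e^{2πiδ·sign r})|r|/d). -/
noncomputable def clockEigval (d : ℕ) (δ : ℝ) (r : ℤ) : ℂ :=
  Complex.exp (-2 * Real.pi * Complex.I * δ * r / d) *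
    (1 - (1 - Complex.exp (2 * Real.pi * Complex.I * δ * (r.sign : ℂ))) * ((|r| : ℤ) : ℂ) / d)

/-- Eigenvector v_r = (d^{-1/2} e^{2πirk/d})_k. -/
noncomputable def clockEigvec (d : ℕ) (r : ℤ) : Fin d → ℂ := fun k =>
  (1 / Real.sqrt d : ℝ) * Complex.exp (2 * Real.pi * Complex.I * r * (clockIdx d k : ℂ) / d)

/-!
`⟨θ_a, θ_b⟩` is a normalised geometric sum of `e(βn) = exp(2πiβn/d)` with `β = a - b`, so
`|⟨θ_a, θ_b⟩|²` is a double sum of `e(β(n - m))`. Each difference `t ∈ (-d, d)` occurs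
`d - |t|` times (Fejér's count), and folding `t` back into the centred window by `t ↦ t ∓ d`
costs only the phase `e^{∓2πiβ}`, which for `a = l`, `b = k + δ` is `e^{±2πiδ}`. This gives
`M = F diag(λ) F*` with `F` the unitary Fourier matrix in centred indices, so the columns of `F`
are eigenvectors, and since `λ_0 = 1` the constant vector is a left and right eigenvector for
the eigenvalue `1`, i.e. `M` is doubly stochastic.
-/

open Finset Real

variable {d : ℕ}

lemma clockIdx_sub_clockIdx (n m : Fin d) : clockIdx d n - clockIdx d m = (n : ℤ) - m := by
  simp [clockIdx]

lemma exists_clockIdx_eq_zero (hd : Odd d) : ∃ c : Fin d, clockIdx d c = 0 := by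
  obtain ⟨c, rfl⟩ := hd
  exact ⟨⟨c, by omega⟩, by simp [clockIdx]⟩

lemma not_dvd_clockIdx_sub {a b : Fin d} (h : a ≠ b) :
    ¬ (d : ℤ) ∣ clockIdx d a - clockIdx d b := by
  rw [clockIdx_sub_clockIdx]
  intro hdvd
  refine h (Fin.ext ?_)
  have := Int.eq_zero_of_abs_lt_dvd hdvd (by rw [abs_lt]; omega)
  omega

lemma sum_sum_fin_sub {M : Type*} [AddCommGroup M] (N : ℕ) (f : ℤ → M) :
    ∑ n : Fin N, ∑ m : Fin N, f (n - m) =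
      ∑ r : Fin N, (((N : ℤ) - r) • f r + (r : ℤ) • f (r - N)) := by
  rcases N.eq_zero_or_pos with rfl | hN
  · simp
  have : NeZero N := ⟨hN.ne'⟩
  have hshift (m : Fin N) :
      ∑ n : Fin N, f (n - m) = ∑ r : Fin N, if N ≤ (r : ℕ) + m then f (r - N) else f r := by
    refine (Fintype.sum_equiv (Equiv.addRight m) _ _ fun r => ?_).symm
    rw [Equiv.coe_addRight, Fin.val_add_eq_ite]
    split_ifs
    · congr 1; omega
    · congr 1; omega
  have hcount (r : Fin N) :
      ∑ m : Fin N, (if N ≤ (r : ℕ) + m then f (r - N) else f r) =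
        ((N : ℤ) - r) • f r + (r : ℤ) • f (r - N) := by
    have hlow : #{m : Fin N | ¬ N ≤ (r : ℕ) + m} = N - r := by
      rw [filter_congr (q := fun m : Fin N => (m : ℕ) < N - r) (fun m _ => by omega),
        Fin.card_filter_val_lt]
      omega
    have hhigh : #{m : Fin N | N ≤ (r : ℕ) + m} = r := by
      have := card_filter_add_card_filter_not (s := univ) (fun m : Fin N => N ≤ (r : ℕ) + m)
      rw [card_univ, Fintype.card_fin, hlow] at this
      omega
    rw [sum_ite, sum_const, sum_const, hhigh, hlow, ← natCast_zsmul, ← natCast_zsmul,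
      Nat.cast_sub r.isLt.le, add_comm]
  rw [sum_comm]
  simp_rw [hshift]
  rw [sum_comm]
  exact sum_congr rfl fun r _ => hcount r

lemma sum_fin_eq_sum_clockIdx {M : Type*} [AddCommGroup M] (hd : Odd d) (f : ℤ → M) :
    ∑ r : Fin d, (((d : ℤ) - r) • f r + (r : ℤ) • f (r - d)) =
      ∑ r : Fin d, (((d : ℤ) - |clockIdx d r|) • f (clockIdx d r) +
        |clockIdx d r| • f (clockIdx d r - d * (clockIdx d r).sign)) := by
  set T : ℤ → M := fun r => ((d : ℤ) - r) • f r + r • f (r - d)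
  have hfold (ρ : ℤ) : ((d : ℤ) - |ρ|) • f ρ + |ρ| • f (ρ - d * ρ.sign) =
      T (if 0 ≤ ρ then ρ else ρ + d) := by
    rcases lt_trichotomy ρ 0 with h | rfl | h
    · simp only [T, if_neg h.not_ge, abs_of_neg h, Int.sign_eq_neg_one_of_neg h, mul_neg_one,
        sub_neg_eq_add, add_sub_cancel_right]
      module
    · simp [T]
    · simp [T, if_pos h.le, abs_of_pos h, Int.sign_eq_one_of_pos h]
  have : NeZero d := ⟨hd.pos.ne'⟩
  obtain ⟨c, hc⟩ := exists_clockIdx_eq_zero hd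
  refine (Fintype.sum_equiv (Equiv.subRight c) _ _ fun x => ?_).symm
  have hx := clockIdx_sub_clockIdx x c
  rw [hc, sub_zero] at hx
  rw [hfold, Equiv.subRight_apply, Fin.intCast_val_sub_eq_sub_add_ite]
  congr 1
  split_ifs <;> omega

lemma sum_sum_clockIdx_sub {M : Type*} [AddCommGroup M] (hd : Odd d) (f : ℤ → M) :
    ∑ n : Fin d, ∑ m : Fin d, f (clockIdx d n - clockIdx d m) =
      ∑ r : Fin d, (((d : ℤ) - |clockIdx d r|) • f (clockIdx d r) +
        |clockIdx d r| • f (clockIdx d r - d * (clockIdx d r).sign)) := by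
  simp only [clockIdx_sub_clockIdx]
  rw [sum_sum_fin_sub, sum_fin_eq_sum_clockIdx hd]

lemma sum_exp_clockIdx_eq_zero {t : ℤ} (ht : ¬ (d : ℤ) ∣ t) :
    ∑ k : Fin d, cexp (2 * π * I * t * clockIdx d k / d) = 0 := by
  rcases d.eq_zero_or_pos with rfl | hpos
  · simp
  have hd0 : (d : ℂ) ≠ 0 := Nat.cast_ne_zero.mpr hpos.ne'
  set ω := cexp (2 * π * I * t / d)
  have hterm (k : Fin d) : cexp (2 * π * I * t * clockIdx d k / d) =
      cexp (-(2 * π * I * t * (((d : ℤ) - 1) / 2 : ℤ) / d)) * ω ^ (k : ℕ) := by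
    rw [← Complex.exp_nat_mul, ← Complex.exp_add]
    congr 1
    push_cast [clockIdx]
    ring
  have hω : ω ≠ 1 := by
    rw [Ne, Complex.exp_eq_one_iff]
    rintro ⟨n, hn⟩
    refine ht ⟨n, ?_⟩
    field_simp at hn
    exact_mod_cast hn
  have hωd : ω ^ d = 1 := by
    rw [← Complex.exp_nat_mul, mul_div_cancel₀ _ hd0, mul_comm, Complex.exp_int_mul_two_pi_mul_I]
  rw [Fintype.sum_congr _ _ hterm, ← mul_sum, Fin.sum_univ_eq_sum_range (ω ^ ·),
    geom_sum_eq hω, hωd, sub_self, zero_div, mul_zero]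

lemma sum_exp_clockIdx_sub_mul (a b : Fin d) :
    ∑ k : Fin d, cexp (2 * π * I * ((clockIdx d a : ℂ) - clockIdx d b) * clockIdx d k / d) =
      if a = b then (d : ℂ) else 0 := by
  split_ifs with h
  · simp [h]
  · simpa using sum_exp_clockIdx_eq_zero (not_dvd_clockIdx_sub h)

lemma exp_mul_exp_eq {x y z w : ℂ} (h : x + y = z + w) : cexp x * cexp y = cexp z * cexp w := by
  rw [← Complex.exp_add, h, Complex.exp_add]

/-- `F diag(μ) F*`, where `F = (clockEigvec d (clockIdx d r))_r` is the unitary Fourier matrix in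
centred indices. -/
noncomputable def clockSpectralMatrix (d : ℕ) (μ : ℤ → ℂ) : Matrix (Fin d) (Fin d) ℂ :=
  Matrix.of fun l k => (1 / d) * ∑ r : Fin d,
    cexp (2 * π * I * (clockIdx d r : ℂ) * ((clockIdx d l : ℂ) - (clockIdx d k : ℂ)) / d) *
      μ (clockIdx d r)

lemma sum_clockSpectralMatrix_mul_exp (μ : ℤ → ℂ) (s l : Fin d) :
    ∑ k : Fin d, clockSpectralMatrix d μ l k * cexp (2 * π * I * clockIdx d s * clockIdx d k / d) =
      μ (clockIdx d s) * cexp (2 * π * I * clockIdx d s * clockIdx d l / d) := by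
  have hd0 : (d : ℂ) ≠ 0 := Nat.cast_ne_zero.mpr (Fin.pos s).ne'
  have hexp (r k : Fin d) :
      cexp (2 * π * I * clockIdx d r * ((clockIdx d l : ℂ) - clockIdx d k) / d) *
        cexp (2 * π * I * clockIdx d s * clockIdx d k / d) =
      cexp (2 * π * I * ((clockIdx d s : ℂ) - clockIdx d r) * clockIdx d k / d) *
        cexp (2 * π * I * clockIdx d r * clockIdx d l / d) :=
    exp_mul_exp_eq (by ring)
  calc _ = (1 / d) * ∑ r : Fin d, (∑ k : Fin d,
          cexp (2 * π * I * ((clockIdx d s : ℂ) - clockIdx d r) * clockIdx d k / d)) *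
            (cexp (2 * π * I * clockIdx d r * clockIdx d l / d) * μ (clockIdx d r)) := by
        simp only [clockSpectralMatrix, Matrix.of_apply, mul_sum, sum_mul]
        rw [sum_comm]
        refine Fintype.sum_congr _ _ fun r => Fintype.sum_congr _ _ fun k => ?_
        linear_combination (1 / d * μ (clockIdx d r)) * hexp r k
    _ = _ := by
        simp only [sum_exp_clockIdx_sub_mul, ite_mul, zero_mul, sum_ite_eq, mem_univ, if_true]
        field_simp

lemma sum_exp_mul_clockSpectralMatrix (μ : ℤ → ℂ) (s k : Fin d) :
    ∑ l : Fin d,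
        cexp (-(2 * π * I * clockIdx d s * clockIdx d l / d)) * clockSpectralMatrix d μ l k =
      μ (clockIdx d s) * cexp (-(2 * π * I * clockIdx d s * clockIdx d k / d)) := by
  have hd0 : (d : ℂ) ≠ 0 := Nat.cast_ne_zero.mpr (Fin.pos s).ne'
  have hexp (r l : Fin d) :
      cexp (-(2 * π * I * clockIdx d s * clockIdx d l / d)) *
        cexp (2 * π * I * clockIdx d r * ((clockIdx d l : ℂ) - clockIdx d k) / d) =
      cexp (2 * π * I * ((clockIdx d r : ℂ) - clockIdx d s) * clockIdx d l / d) *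
        cexp (-(2 * π * I * clockIdx d r * clockIdx d k / d)) :=
    exp_mul_exp_eq (by ring)
  calc _ = (1 / d) * ∑ r : Fin d, (∑ l : Fin d,
          cexp (2 * π * I * ((clockIdx d r : ℂ) - clockIdx d s) * clockIdx d l / d)) *
            (cexp (-(2 * π * I * clockIdx d r * clockIdx d k / d)) * μ (clockIdx d r)) := by
        simp only [clockSpectralMatrix, Matrix.of_apply, mul_sum, sum_mul]
        rw [sum_comm]
        refine Fintype.sum_congr _ _ fun r => Fintype.sum_congr _ _ fun l => ?_
        linear_combination (1 / d * μ (clockIdx d r)) * hexp r l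
    _ = _ := by
        simp only [sum_exp_clockIdx_sub_mul, ite_mul, zero_mul, sum_ite_eq', mem_univ, if_true]
        field_simp

lemma clockSpectralMatrix_mulVec (μ : ℤ → ℂ) (s : Fin d) :
    (clockSpectralMatrix d μ).mulVec (clockEigvec d (clockIdx d s)) =
      μ (clockIdx d s) • clockEigvec d (clockIdx d s) := by
  ext l
  simp only [Matrix.mulVec, dotProduct, clockEigvec, Pi.smul_apply, smul_eq_mul,
    mul_left_comm _ ((1 / Real.sqrt d : ℝ) : ℂ), ← mul_sum, sum_clockSpectralMatrix_mul_exp]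

lemma sum_clockSpectralMatrix_apply_left (hd : Odd d) (μ : ℤ → ℂ) (k : Fin d) :
    ∑ l : Fin d, clockSpectralMatrix d μ l k = μ 0 := by
  obtain ⟨c, hc⟩ := exists_clockIdx_eq_zero hd
  simpa [hc] using sum_exp_mul_clockSpectralMatrix μ c k

lemma sum_clockSpectralMatrix_apply_right (hd : Odd d) (μ : ℤ → ℂ) (l : Fin d) :
    ∑ k : Fin d, clockSpectralMatrix d μ l k = μ 0 := by
  obtain ⟨c, hc⟩ := exists_clockIdx_eq_zero hd
  simpa [hc] using sum_clockSpectralMatrix_mul_exp μ c l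

lemma inner_clockVec (a b : ℝ) :
    inner ℂ (clockVec d a) (clockVec d b) =
      (1 / d) * ∑ n : Fin d, cexp (2 * π * I * (a - b) * clockIdx d n / d) := by
  have hnorm : ((1 / Real.sqrt d : ℝ) : ℂ) * ((1 / Real.sqrt d : ℝ) : ℂ) = 1 / d := by
    rw [← Complex.ofReal_mul, div_mul_div_comm, one_mul, Real.mul_self_sqrt d.cast_nonneg]
    push_cast; rfl
  rw [PiLp.inner_apply, mul_sum]
  refine Fintype.sum_congr _ _ fun n => ?_
  simp only [clockVec, RCLike.inner_apply, map_mul, Complex.conj_ofReal, ← Complex.exp_conj]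
  rw [mul_mul_mul_comm, hnorm, ← Complex.exp_add]
  congr 2
  simp only [map_mul, map_div₀, map_neg, map_ofNat, map_intCast, map_natCast, conj_ofReal, conj_I]
  ring

lemma norm_sq_inner_clockVec_eq_sum_sum (a b : ℝ) :
    ((‖inner ℂ (clockVec d a) (clockVec d b)‖ ^ 2 : ℝ) : ℂ) =
      (1 / d ^ 2) * ∑ n : Fin d, ∑ m : Fin d,
        cexp (2 * π * I * (a - b) * ((clockIdx d n - clockIdx d m : ℤ) : ℂ) / d) := by
  rw [Complex.ofReal_pow, ← Complex.mul_conj', inner_clockVec, map_mul, map_sum,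
    mul_mul_mul_comm, sum_mul_sum]
  congr 1
  · simp [sq]
  · refine Fintype.sum_congr _ _ fun n => Fintype.sum_congr _ _ fun m => ?_
    rw [← Complex.exp_conj, ← Complex.exp_add]
    congr 1
    simp only [map_mul, map_div₀, map_sub, map_ofNat, map_intCast, map_natCast, conj_ofReal,
      conj_I, Int.cast_sub]
    ring

lemma norm_sq_inner_clockVec (hd : Odd d) (a b : ℝ) :
    ((‖inner ℂ (clockVec d a) (clockVec d b)‖ ^ 2 : ℝ) : ℂ) =
      (1 / d) * ∑ r : Fin d, cexp (2 * π * I * (a - b) * clockIdx d r / d) *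
        (1 - (1 - cexp (-(2 * π * I * (a - b) * (clockIdx d r).sign)))
          * ((|clockIdx d r| : ℤ) : ℂ) / d) := by
  have hd0 : (d : ℂ) ≠ 0 := Nat.cast_ne_zero.mpr hd.pos.ne'
  set E : ℤ → ℂ := fun t => cexp (2 * π * I * (a - b) * t / d)
  have hE (t s : ℤ) : E (t - d * s) = cexp (-(2 * π * I * (a - b) * s)) * E t := by
    simp only [E, ← Complex.exp_add]
    congr 1
    push_cast
    field_simp
    ring
  rw [norm_sq_inner_clockVec_eq_sum_sum, sum_sum_clockIdx_sub hd E, mul_sum, mul_sum]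
  refine Fintype.sum_congr _ _ fun r => ?_
  rw [hE, zsmul_eq_mul, zsmul_eq_mul]
  field_simp
  push_cast
  ring

lemma clockM_eq_clockSpectralMatrix (hd : Odd d) (δ : ℝ) :
    clockM d δ = clockSpectralMatrix d (clockEigval d δ) := by
  ext l k
  rw [clockM, Matrix.of_apply, norm_sq_inner_clockVec hd, clockSpectralMatrix, Matrix.of_apply]
  congr 1
  refine Fintype.sum_congr _ _ fun r => ?_
  have hsplit :
      cexp (2 * π * I * ((clockIdx d l : ℝ) - (((clockIdx d k : ℝ) + δ : ℝ) : ℂ)) *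
          clockIdx d r / d) =
        cexp (2 * π * I * clockIdx d r * ((clockIdx d l : ℂ) - clockIdx d k) / d) *
          cexp (-2 * π * I * δ * clockIdx d r / d) := by
    rw [← Complex.exp_add]
    congr 1
    push_cast
    ring
  have hphase :
      cexp (-(2 * π * I * ((clockIdx d l : ℝ) - (((clockIdx d k : ℝ) + δ : ℝ) : ℂ)) *
          (clockIdx d r).sign)) =
        cexp (2 * π * I * δ * (clockIdx d r).sign) := by
    rw [← Complex.exp_periodic.int_mul ((clockIdx d l - clockIdx d k) * (clockIdx d r).sign)]
    congr 1
    push_cast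
    ring
  rw [hsplit, hphase, clockEigval, mul_assoc]

lemma clockEigval_zero (δ : ℝ) : clockEigval d δ 0 = 1 := by
  simp [clockEigval]

theorem stmt_12_general (d : ℕ) (hd : Odd d) (δ : ℝ) :
    (∀ l k : Fin d, clockM d δ l k =
        (1 / d) * ∑ r : Fin d,
          Complex.exp (2 * Real.pi * Complex.I * (clockIdx d r : ℂ)
              * ((clockIdx d l : ℂ) - (clockIdx d k : ℂ)) / d) *
            Complex.exp (-2 * Real.pi * Complex.I * δ * (clockIdx d r : ℂ) / d) *
            (1 - (1 - Complex.exp (2 * Real.pi * Complex.I * δ * ((clockIdx d r).sign : ℂ)))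
              * ((|clockIdx d r| : ℤ) : ℂ) / d)) ∧
    (∀ k : Fin d, ∑ l : Fin d, clockM d δ l k = 1) ∧
    (∀ l : Fin d, ∑ k : Fin d, clockM d δ l k = 1) ∧
    (∀ r : Fin d, (clockM d δ).mulVec (clockEigvec d (clockIdx d r))
        = clockEigval d δ (clockIdx d r) • clockEigvec d (clockIdx d r)) := by
  rw [clockM_eq_clockSpectralMatrix hd]
  refine ⟨fun l k => ?_, fun k => ?_, fun l => ?_, clockSpectralMatrix_mulVec _⟩
  · simp only [clockSpectralMatrix, Matrix.of_apply, clockEigval, mul_assoc]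
  · rw [sum_clockSpectralMatrix_apply_left hd, clockEigval_zero]
  · rw [sum_clockSpectralMatrix_apply_right hd, clockEigval_zero]

theorem stmt_12 (d : ℕ) (hd : Odd d) (hpos : 0 < d) (δ : ℝ) :
    (∀ l k : Fin d, clockM d δ l k =
        (1 / d) * ∑ r : Fin d,
          Complex.exp (2 * Real.pi * Complex.I * (clockIdx d r : ℂ)
              * ((clockIdx d l : ℂ) - (clockIdx d k : ℂ)) / d) *
            Complex.exp (-2 * Real.pi * Complex.I * δ * (clockIdx d r : ℂ) / d) *
            (1 - (1 - Complex.exp (2 * Real.pi * Complex.I * δ * ((clockIdx d r).sign : ℂ)))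
              * ((|clockIdx d r| : ℤ) : ℂ) / d)) ∧
    (∀ k : Fin d, ∑ l : Fin d, clockM d δ l k = 1) ∧
    (∀ l : Fin d, ∑ k : Fin d, clockM d δ l k = 1) ∧
    (∀ r : Fin d, (clockM d δ).mulVec (clockEigvec d (clockIdx d r))
        = clockEigval d δ (clockIdx d r) • clockEigvec d (clockIdx d r)) :=
  stmt_12_general d hd δ
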